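/- arXiv:2204.12604 — 3 statements merged into one kernel-verified Lean document; each statement's English description precedes it below -/
import Mathlib

section
/- Let X be a separable metrizable space equipped with its Borel σ-algebra, let C be a metric space, and let q : X × C → P(X) be weakly continuous, where P(X) is the space of Borel probability measures on X with the topology of weak convergence. For z ∈ P(X) and u ∈ C define η(z,u) ∈ P(X) by η(z,u)(A) := ∫_X q(χ,u)(A) z(dχ) for every Borel set A ⊆ X. Then η : P(X) × C → P(X) is continuous when P(X) carries the topology of weak convergence in both its domain and codomain. -/
open MeasureTheory TopologicalSpace Filter Set
open scoped ENNReal NNReal Topology BoundedContinuousFunction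

section Aux

variable {X : Type*} [TopologicalSpace X] [MeasurableSpace X]

/-- For a fixed bounded continuous `ℝ≥0`-valued function, the lintegral is continuous in the
probability measure (w.r.t. the topology of weak convergence). -/
lemma aux_cont_lintegral [OpensMeasurableSpace X] (f : X →ᵇ ℝ≥0) :
    Continuous fun μ : ProbabilityMeasure X => ∫⁻ x, (f x : ℝ≥0∞) ∂(μ : Measure X) := by
  rw [continuous_iff_continuousAt]
  intro μ₀
  exact ProbabilityMeasure.tendsto_iff_forall_lintegral_tendsto.mp tendsto_id f

lemma aux_lint_le_nnnorm (f : X →ᵇ ℝ≥0) (μ : Measure X) [IsProbabilityMeasure μ] :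
    ∫⁻ x, (f x : ℝ≥0∞) ∂μ ≤ ((nndist f 0 : ℝ≥0) : ℝ≥0∞) := by
  calc ∫⁻ x, (f x : ℝ≥0∞) ∂μ ≤ ∫⁻ _, ((nndist f 0 : ℝ≥0) : ℝ≥0∞) ∂μ :=
        lintegral_mono fun x => ENNReal.coe_le_coe.2
          (BoundedContinuousFunction.NNReal.upper_bound f x)
    _ = ((nndist f 0 : ℝ≥0) : ℝ≥0∞) := by simp

/-- A weakly continuous probability-kernel is a measurable map into measures. -/
lemma aux_meas_kernel {C : Type*} [TopologicalSpace C] [MetrizableSpace X] [BorelSpace X]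
    (q : X × C → ProbabilityMeasure X) (hq : Continuous q) (u : C) :
    Measurable fun χ : X => (q (χ, u) : Measure X) := by
  apply Measure.measurable_measure.mpr
  intro s hs
  refine MeasurableSpace.induction_on_inter
    (C := fun t _ => Measurable fun χ : X => (q (χ, u) : Measure X) t)
    (BorelSpace.measurable_eq.trans borel_eq_generateFrom_isClosed) isPiSystem_isClosed
    (by simp only [measure_empty]; exact measurable_const) ?_ ?_ ?_ s hs
  · intro t ht
    have ht' : IsClosed t := ht
    have mble : ∀ n : ℕ,
        Measurable fun χ => ∫⁻ x, (ht'.apprSeq n x : ℝ≥0∞) ∂(q (χ, u) : Measure X) := fun n =>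
      ((aux_cont_lintegral (ht'.apprSeq n)).comp
        (hq.comp (continuous_id.prodMk continuous_const))).measurable
    exact ENNReal.measurable_of_tendsto mble (tendsto_pi_nhds.mpr fun χ =>
      HasOuterApproxClosed.tendsto_lintegral_apprSeq ht' (q (χ, u) : Measure X))
  · intro t htm ih
    have h : ∀ χ : X, (q (χ, u) : Measure X) tᶜ = 1 - (q (χ, u) : Measure X) t := fun χ => by
      rw [measure_compl htm (measure_ne_top _ _), measure_univ]
    simpa only [h] using (show Measurable fun χ : X => (1 : ℝ≥0∞) - (q (χ, u) : Measure X) t from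
      measurable_const.sub ih)
  · intro g hdis hgm ih
    have h : ∀ χ : X, (q (χ, u) : Measure X) (⋃ i, g i)
        = ∑' i, (q (χ, u) : Measure X) (g i) := fun χ => measure_iUnion hdis hgm
    simpa only [h] using Measurable.ennreal_tsum ih

/-- The key convergence lemma: for a bounded continuous `G : X × C → ℝ≥0∞`, weakly convergent
probability measures `z n → z₀` and points `u n → u₀`, the integrals
`∫ G (·, u n) d(z n)` converge to `∫ G (·, u₀) d z₀`. -/
lemma aux_key {C : Type*} [TopologicalSpace C] [MetrizableSpace X] [BorelSpace X]
    (G : X × C → ℝ≥0∞) (hG : Continuous G) (M : ℝ≥0) (hGM : ∀ p, G p ≤ M)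
    {z : ℕ → ProbabilityMeasure X} {z₀ : ProbabilityMeasure X}
    (hz : Tendsto z atTop (𝓝 z₀))
    {u : ℕ → C} {u₀ : C} (hu : Tendsto u atTop (𝓝 u₀)) :
    Tendsto (fun n => ∫⁻ χ, G (χ, u n) ∂(z n : Measure X)) atTop
      (𝓝 (∫⁻ χ, G (χ, u₀) ∂(z₀ : Measure X))) := by
  have hGne : ∀ p, G p ≠ ∞ := fun p => ((hGM p).trans_lt ENNReal.coe_lt_top).ne
  set L := ∫⁻ χ, G (χ, u₀) ∂(z₀ : Measure X) with hLdef
  have hGmble : ∀ v : C, Measurable fun χ => G (χ, v) := fun v =>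
    (hG.comp (continuous_id.prodMk continuous_const)).measurable
  -- convergence for the fixed-parameter integrals
  have hJ : Tendsto (fun n => ∫⁻ χ, G (χ, u₀) ∂(z n : Measure X)) atTop (𝓝 L) := by
    have contg : Continuous fun χ : X => (G (χ, u₀)).toNNReal := by
      rw [continuous_iff_continuousAt]
      intro χ₀
      exact (ENNReal.tendsto_toNNReal (hGne _)).comp
        ((hG.comp (continuous_id.prodMk continuous_const)).tendsto χ₀)
    have hb : ∀ x : X, (G (x, u₀)).toNNReal ≤ M := fun x => by
      have h : ((G (x, u₀)).toNNReal : ℝ≥0∞) ≤ (M : ℝ≥0∞) := by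
        rw [ENNReal.coe_toNNReal (hGne _)]; exact hGM _
      exact_mod_cast h
    let g : X →ᵇ ℝ≥0 :=
      { toFun := fun χ => (G (χ, u₀)).toNNReal
        continuous_toFun := contg
        map_bounded' := by
          refine ⟨M, fun x y => ?_⟩
          rw [NNReal.dist_eq, abs_sub_le_iff]
          constructor
          · exact (sub_le_self _ (by positivity)).trans (by exact_mod_cast hb x)
          · exact (sub_le_self _ (by positivity)).trans (by exact_mod_cast hb y) }
    have hco : ∀ ν : Measure X, (∫⁻ x, ((g x : ℝ≥0) : ℝ≥0∞) ∂ν) = ∫⁻ x, G (x, u₀) ∂ν := by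
      intro ν
      refine lintegral_congr fun x => ?_
      show (((G (x, u₀)).toNNReal : ℝ≥0) : ℝ≥0∞) = G (x, u₀)
      exact ENNReal.coe_toNNReal (hGne _)
    have h := ProbabilityMeasure.tendsto_iff_forall_lintegral_tendsto.mp hz g
    simpa only [hco] using h
  -- the modulus of non-uniformity
  set ψ : ℕ → X → ℝ≥0∞ :=
    fun n χ => (G (χ, u n) - G (χ, u₀)) + (G (χ, u₀) - G (χ, u n)) with hψdef
  have hψ_le : ∀ n χ, ψ n χ ≤ 2 * (M : ℝ≥0∞) := fun n χ => by
    rw [two_mul]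
    exact add_le_add (tsub_le_self.trans (hGM _)) (tsub_le_self.trans (hGM _))
  have hIJ : ∀ n, ∫⁻ χ, G (χ, u n) ∂(z n : Measure X)
      ≤ ∫⁻ χ, G (χ, u₀) ∂(z n : Measure X) + ∫⁻ χ, ψ n χ ∂(z n : Measure X) := by
    intro n
    rw [← tsub_le_iff_left]
    calc ∫⁻ χ, G (χ, u n) ∂(z n : Measure X) - ∫⁻ χ, G (χ, u₀) ∂(z n : Measure X)
        ≤ ∫⁻ χ, (G (χ, u n) - G (χ, u₀)) ∂(z n : Measure X) :=
          lintegral_sub_le _ _ (hGmble u₀)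
      _ ≤ ∫⁻ χ, ψ n χ ∂(z n : Measure X) := lintegral_mono fun χ => le_self_add
  have hJI : ∀ n, ∫⁻ χ, G (χ, u₀) ∂(z n : Measure X)
      ≤ ∫⁻ χ, G (χ, u n) ∂(z n : Measure X) + ∫⁻ χ, ψ n χ ∂(z n : Measure X) := by
    intro n
    rw [← tsub_le_iff_left]
    calc ∫⁻ χ, G (χ, u₀) ∂(z n : Measure X) - ∫⁻ χ, G (χ, u n) ∂(z n : Measure X)
        ≤ ∫⁻ χ, (G (χ, u₀) - G (χ, u n)) ∂(z n : Measure X) :=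
          lintegral_sub_le _ _ (hGmble (u n))
      _ ≤ ∫⁻ χ, ψ n χ ∂(z n : Measure X) := lintegral_mono fun χ => le_add_self
  -- the main estimate: eventual smallness of `∫ ψ n d(z n)`
  have main : ∀ δ : ℝ≥0, 0 < δ → ∀ᶠ n in atTop,
      ∫⁻ χ, ψ n χ ∂(z n : Measure X) ≤ (δ : ℝ≥0∞) + 2 * (M : ℝ≥0∞) * (δ : ℝ≥0∞) := by
    intro δ hδ
    have hδ' : (0 : ℝ≥0∞) < δ := by exact_mod_cast hδ
    set A : ℕ → Set X := fun m => {χ | ∃ k, m ≤ k ∧ (δ : ℝ≥0∞) ≤ ψ k χ} with hAdef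
    set F : ℕ → Set X := fun m => closure (A m) with hFdef
    have F_closed : ∀ m, IsClosed (F m) := fun m => isClosed_closure
    have F_anti : Antitone F := by
      intro m m' h
      refine closure_mono fun χ hχ => ?_
      obtain ⟨k, hk, hle⟩ := hχ
      exact ⟨k, le_trans h hk, hle⟩
    have F_inter : ⋂ m, F m = ∅ := by
      by_contra hne
      obtain ⟨χ, hχ⟩ := nonempty_iff_ne_empty.2 hne
      have hχm : ∀ m, χ ∈ closure (A m) := fun m => mem_iInter.mp hχ m
      obtain ⟨V, hV⟩ := (𝓝 χ).exists_antitone_basis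
      have hyex : ∀ m, ∃ y, y ∈ A m ∧ y ∈ V m := by
        intro m
        obtain ⟨y, hy1, hy2⟩ := mem_closure_iff_nhds.mp (hχm m) (V m) (hV.mem m)
        exact ⟨y, hy2, hy1⟩
      choose y hyA hyV using hyex
      have hy : Tendsto y atTop (𝓝 χ) := hV.tendsto hyV
      simp only [hAdef, Set.mem_setOf_eq] at hyA
      choose k hk hkψ using hyA
      have hk_top : Tendsto k atTop atTop := tendsto_atTop_mono hk tendsto_id
      have h1 : Tendsto (fun m => G (y m, u (k m))) atTop (𝓝 (G (χ, u₀))) :=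
        (hG.tendsto (χ, u₀)).comp (hy.prodMk_nhds (hu.comp hk_top))
      have h2 : Tendsto (fun m => G (y m, u₀)) atTop (𝓝 (G (χ, u₀))) :=
        (hG.tendsto (χ, u₀)).comp (hy.prodMk_nhds tendsto_const_nhds)
      have h3 : Tendsto (fun m => ψ (k m) (y m)) atTop (𝓝 0) := by
        have := (ENNReal.Tendsto.sub h1 h2 (Or.inl (hGne _))).add (ENNReal.Tendsto.sub h2 h1 (Or.inl (hGne _)))
        simpa using this
      have hcon : (δ : ℝ≥0∞) ≤ 0 := ge_of_tendsto' h3 hkψ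
      simp only [le_zero_iff] at hcon
      exact hδ'.ne' hcon
    have hz0 : Tendsto (fun m => (z₀ : Measure X) (F m)) atTop (𝓝 0) := by
      have h := tendsto_measure_iInter_atTop (μ := (z₀ : Measure X))
        (fun m => ((F_closed m).measurableSet).nullMeasurableSet) F_anti
        ⟨0, measure_ne_top _ _⟩
      rw [F_inter] at h
      simpa [Function.comp_def] using h
    obtain ⟨m₀, hm₀⟩ := (hz0.eventually (gt_mem_nhds hδ')).exists
    have hlim : limsup (fun n => (z n : Measure X) (F m₀)) atTop ≤ (z₀ : Measure X) (F m₀) :=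
      ProbabilityMeasure.limsup_measure_closed_le_of_tendsto hz (F_closed m₀)
    have hev : ∀ᶠ n in atTop, (z n : Measure X) (F m₀) < δ :=
      eventually_lt_of_limsup_lt (lt_of_le_of_lt hlim hm₀)
    filter_upwards [hev, eventually_ge_atTop m₀] with n hn hnm
    have hpt : ∀ χ, ψ n χ ≤ (δ : ℝ≥0∞) + (F m₀).indicator (fun _ => 2 * (M : ℝ≥0∞)) χ := by
      intro χ
      by_cases hχ : χ ∈ F m₀
      · rw [Set.indicator_of_mem hχ]
        exact (hψ_le n χ).trans le_add_self
      · rw [Set.indicator_of_notMem hχ, add_zero]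
        have hnle : ¬ ((δ : ℝ≥0∞) ≤ ψ n χ) := fun hle => hχ (subset_closure ⟨n, hnm, hle⟩)
        exact (not_le.mp hnle).le
    calc ∫⁻ χ, ψ n χ ∂(z n : Measure X)
        ≤ ∫⁻ χ, ((δ : ℝ≥0∞) + (F m₀).indicator (fun _ => 2 * (M : ℝ≥0∞)) χ)
            ∂(z n : Measure X) := lintegral_mono hpt
      _ = (δ : ℝ≥0∞) + 2 * (M : ℝ≥0∞) * (z n : Measure X) (F m₀) := by
          rw [lintegral_add_left measurable_const, lintegral_const,
            lintegral_indicator_const (F_closed m₀).measurableSet]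
          simp
      _ ≤ (δ : ℝ≥0∞) + 2 * (M : ℝ≥0∞) * (δ : ℝ≥0∞) :=
          add_le_add_right (mul_le_mul_right hn.le _) _
  -- conclusion
  have hLM : L ≤ (M : ℝ≥0∞) := by
    rw [hLdef]
    calc ∫⁻ χ, G (χ, u₀) ∂(z₀ : Measure X) ≤ ∫⁻ _, (M : ℝ≥0∞) ∂(z₀ : Measure X) :=
        lintegral_mono fun χ => hGM _
      _ = (M : ℝ≥0∞) := by simp
  have hLne : L ≠ ∞ := (hLM.trans_lt ENNReal.coe_lt_top).ne
  rw [ENNReal.tendsto_nhds hLne]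
  intro ε hε
  -- choose δ
  have hM2 : (0 : ℝ≥0) < 2 + 2 * M := by positivity
  set e : ℝ≥0 := if ε = ∞ then 1 else ε.toNNReal with hedef
  have he_pos : 0 < e := by
    rw [hedef]
    split_ifs with h
    · exact one_pos
    · exact ENNReal.toNNReal_pos hε.ne' h
  have he_le : (e : ℝ≥0∞) ≤ ε := by
    rw [hedef]
    split_ifs with h
    · rw [h]; exact le_top
    · rw [ENNReal.coe_toNNReal h]
  set δ : ℝ≥0 := e / (2 + 2 * M) with hδdef
  have hδpos : 0 < δ := by
    rw [hδdef]
    exact div_pos he_pos hM2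
  have hsum : (δ : ℝ≥0∞) + ((δ : ℝ≥0∞) + 2 * (M : ℝ≥0∞) * (δ : ℝ≥0∞)) ≤ ε := by
    have h1 : δ * (2 + 2 * M) ≤ e := by
      rw [hδdef]
      exact (le_div_iff₀ hM2).mp le_rfl
    have h2 : δ + (δ + 2 * M * δ) = δ * (2 + 2 * M) := by ring
    calc (δ : ℝ≥0∞) + ((δ : ℝ≥0∞) + 2 * (M : ℝ≥0∞) * (δ : ℝ≥0∞))
        = ((δ + (δ + 2 * M * δ) : ℝ≥0) : ℝ≥0∞) := by push_cast; ring
      _ = ((δ * (2 + 2 * M) : ℝ≥0) : ℝ≥0∞) := by rw [h2]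
      _ ≤ (e : ℝ≥0∞) := by exact_mod_cast h1
      _ ≤ ε := he_le
  have hδ'pos : (0 : ℝ≥0∞) < δ := by exact_mod_cast hδpos
  have hJev := (ENNReal.tendsto_nhds hLne).mp hJ (δ : ℝ≥0∞) hδ'pos
  filter_upwards [main δ hδpos, hJev] with n hmain hJn
  obtain ⟨hJn1, hJn2⟩ := hJn
  have hLle : L ≤ ∫⁻ χ, G (χ, u₀) ∂(z n : Measure X) + (δ : ℝ≥0∞) :=
    tsub_le_iff_right.mp hJn1
  constructor
  · -- lower bound
    rw [tsub_le_iff_right]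
    calc L ≤ ∫⁻ χ, G (χ, u₀) ∂(z n : Measure X) + (δ : ℝ≥0∞) := hLle
      _ ≤ (∫⁻ χ, G (χ, u n) ∂(z n : Measure X) + ∫⁻ χ, ψ n χ ∂(z n : Measure X))
            + (δ : ℝ≥0∞) := add_le_add_left (hJI n) _
      _ ≤ (∫⁻ χ, G (χ, u n) ∂(z n : Measure X)
            + ((δ : ℝ≥0∞) + 2 * (M : ℝ≥0∞) * (δ : ℝ≥0∞))) + (δ : ℝ≥0∞) :=
          add_le_add_left (add_le_add_right hmain _) _
      _ = ∫⁻ χ, G (χ, u n) ∂(z n : Measure X)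
            + ((δ : ℝ≥0∞) + ((δ : ℝ≥0∞) + 2 * (M : ℝ≥0∞) * (δ : ℝ≥0∞))) := by ring
      _ ≤ ∫⁻ χ, G (χ, u n) ∂(z n : Measure X) + ε := add_le_add_right hsum _
  · -- upper bound
    calc ∫⁻ χ, G (χ, u n) ∂(z n : Measure X)
        ≤ ∫⁻ χ, G (χ, u₀) ∂(z n : Measure X) + ∫⁻ χ, ψ n χ ∂(z n : Measure X) := hIJ n
      _ ≤ (L + (δ : ℝ≥0∞)) + ((δ : ℝ≥0∞) + 2 * (M : ℝ≥0∞) * (δ : ℝ≥0∞)) :=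
          add_le_add hJn2 hmain
      _ = L + ((δ : ℝ≥0∞) + ((δ : ℝ≥0∞) + 2 * (M : ℝ≥0∞) * (δ : ℝ≥0∞))) := by ring
      _ ≤ L + ε := add_le_add_right hsum _

end Aux

/-- If `q : X × C → P(X)` is a weakly continuous stochastic kernel on a separable metrizable
space `X` (with its Borel σ-algebra) and `η : P(X) × C → P(X)` satisfies
`η(z,u)(A) = ∫ q(χ,u)(A) z(dχ)` for every Borel set `A`, then `η` is continuous for the
topology of weak convergence. -/
theorem stmt_9 (X C : Type*) [TopologicalSpace X] [MetrizableSpace X] [SeparableSpace X]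
    [MeasurableSpace X] [BorelSpace X] [MetricSpace C]
    (q : X × C → ProbabilityMeasure X) (hq : Continuous q)
    (η : ProbabilityMeasure X × C → ProbabilityMeasure X)
    (hη : ∀ (z : ProbabilityMeasure X) (u : C) (A : Set X), MeasurableSet A →
      (η (z, u) : Measure X) A = ∫⁻ χ, (q (χ, u) : Measure X) A ∂(z : Measure X)) :
    Continuous η := by
  -- the basic identity: `η (z, u)` is the bind of `z` with the kernel `q (·, u)`
  have lint_eq : ∀ (f : X →ᵇ ℝ≥0) (r : ProbabilityMeasure X × C),
      ∫⁻ x, (f x : ℝ≥0∞) ∂(η r : Measure X)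
        = ∫⁻ χ, ∫⁻ x, (f x : ℝ≥0∞) ∂(q (χ, r.2) : Measure X) ∂(r.1 : Measure X) := by
    rintro f ⟨z, u⟩
    have hκ := aux_meas_kernel q hq u
    have hb : (η (z, u) : Measure X)
        = (z : Measure X).bind (fun χ => (q (χ, u) : Measure X)) := by
      refine Measure.ext fun s hs => ?_
      rw [Measure.bind_apply hs hκ.aemeasurable, hη z u s hs]
    have hf : Measurable fun x : X => (f x : ℝ≥0∞) :=
      measurable_coe_nnreal_ennreal.comp f.continuous.measurable
    rw [hb, Measure.lintegral_bind hκ.aemeasurable hf.aemeasurable]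
  -- sequential continuity suffices
  apply SeqContinuous.continuous
  intro p a hp
  obtain ⟨z₀, u₀⟩ := a
  have hz : Tendsto (fun n => (p n).1) atTop (𝓝 z₀) := (continuous_fst.tendsto _).comp hp
  have hu : Tendsto (fun n => (p n).2) atTop (𝓝 u₀) := (continuous_snd.tendsto _).comp hp
  rw [ProbabilityMeasure.tendsto_iff_forall_lintegral_tendsto]
  intro f
  have hkey := aux_key (X := X) (C := C)
    (fun r => ∫⁻ x, (f x : ℝ≥0∞) ∂(q r : Measure X))
    ((aux_cont_lintegral f).comp hq) (nndist f 0)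
    (fun r => aux_lint_le_nnnorm f (q r : Measure X)) hz hu
  have hg : ∀ n : ℕ, ∫⁻ χ, (∫⁻ x, (f x : ℝ≥0∞) ∂(q (χ, (p n).2) : Measure X))
      ∂((p n).1 : Measure X) = ∫⁻ x, (f x : ℝ≥0∞) ∂((η ∘ p) n : Measure X) := by
    intro n
    rw [Function.comp_apply, lint_eq f (p n)]
  have hl : (∫⁻ χ, (∫⁻ x, (f x : ℝ≥0∞) ∂(q (χ, u₀) : Measure X)) ∂(z₀ : Measure X))
      = ∫⁻ x, (f x : ℝ≥0∞) ∂(η (z₀, u₀) : Measure X) := (lint_eq f (z₀, u₀)).symm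
  rw [← hl]
  exact Tendsto.congr hg hkey
end

section
/- Let Z be a separable metrizable space equipped with its Borel σ-algebra, let C be a compact metric space, let N ∈ ℕ, let T_u ⊆ {0,…,N−1} and fix a default control 𝐮 ∈ C. For each t ∈ {0,…,N−1} let c̃_t : Z × C → [0,∞] be lower semicontinuous, let c̃_N : Z → [0,∞] be lower semicontinuous, and for each t ∈ {0,…,N−1} let q̃_{t+1} : Z × C → P(Z) be weakly continuous, where P(Z) is the space of Borel probability measures on Z with the topology of weak convergence. Define J_N := c̃_N and, backwards for t = N−1,…,0, define V_t(z,u) := c̃_t(z,u) + ∫_Z J_{t+1}(z') q̃_{t+1}(z,u)(dz') and J_t(z) := inf_{u ∈ C} V_t(z,u) if t ∈ T_u, and J_t(z) := V_t(z,𝐮) if t ∉ T_u. Then for every t ∈ {0,…,N}, J_t : Z → [0,∞] is lower semicontinuous, and for every t ∈ {0,…,N−1} there exists a Borel measurable function κ_t : Z → C such that V_t(z,κ_t(z)) = J_t(z) for all z ∈ Z (with κ_t constantly equal to 𝐮 for t ∉ T_u). -/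
open scoped Classical

open MeasureTheory TopologicalSpace

open scoped ENNReal NNReal
open Set Filter



lemma lsc_biInf_compact {X Y : Type*} [TopologicalSpace X] [TopologicalSpace Y]
    {V : X × Y → ℝ≥0∞} (hV : LowerSemicontinuous V) {K : Set Y} (hK : IsCompact K) :
    LowerSemicontinuous fun x => ⨅ y ∈ K, V (x, y) := by
  intro x a ha
  rcases exists_between ha with ⟨b, hab, hb⟩
  have hU : IsOpen {p : X × Y | b < V p} := hV.isOpen_preimage b
  have hsub : ({x} : Set X) ×ˢ K ⊆ {p | b < V p} := by
    rintro ⟨x', y⟩ ⟨hx', hy⟩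
    rcases hx' with rfl
    exact lt_of_lt_of_le hb (iInf₂_le y hy)
  obtain ⟨u, v, hu, hv, hxu, hKv, huv⟩ := generalized_tube_lemma isCompact_singleton hK hU hsub
  filter_upwards [hu.mem_nhds (hxu rfl)] with x' hx'
  exact lt_of_lt_of_le hab (le_iInf₂ fun y hy => (huv ⟨hx', hKv hy⟩).le)

lemma exists_min_lsc {Y : Type*} [TopologicalSpace Y] {f : Y → ℝ≥0∞}
    (hf : LowerSemicontinuous f) {K : Set Y} (hK : IsCompact K) (hKc : IsClosed K)
    (h0 : K.Nonempty) : ∃ c ∈ K, f c = ⨅ y ∈ K, f y := by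
  set a := ⨅ y ∈ K, f y with ha
  set S : ℕ → Set Y := fun n => K ∩ f ⁻¹' Iic (a + ((n : ℝ≥0∞) + 1)⁻¹) with hS
  have hclosed : ∀ n, IsClosed (S n) := fun n =>
    hKc.inter (hf.isClosed_preimage _)
  have hSne : ∀ n, (S n).Nonempty := by
    intro n
    by_cases hainf : a = ∞
    · obtain ⟨y, hy⟩ := h0
      refine ⟨y, hy, ?_⟩
      simp [hainf]
    · have hlt : a < a + ((n : ℝ≥0∞) + 1)⁻¹ :=
        ENNReal.lt_add_right hainf (by simp)
      rw [ha] at hlt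
      simp only [iInf_lt_iff] at hlt
      obtain ⟨y, hy, hfy⟩ := hlt
      exact ⟨y, hy, le_of_lt hfy⟩
  have hdec : ∀ n, S (n + 1) ⊆ S n := by
    intro n
    apply inter_subset_inter_right
    apply preimage_mono
    apply Iic_subset_Iic.mpr
    apply add_le_add_right
    rw [ENNReal.inv_le_inv]
    push_cast
    exact le_self_add
  obtain ⟨c, hc⟩ := IsCompact.nonempty_iInter_of_sequence_nonempty_isCompact_isClosed
    S hdec hSne ((hK.inter_right (hf.isClosed_preimage _))) hclosed
  simp only [mem_iInter, mem_inter_iff, mem_preimage, mem_Iic] at hc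
  have hcK : c ∈ K := (hc 0).1
  refine ⟨c, hcK, le_antisymm ?_ (iInf₂_le c hcK)⟩
  by_cases hainf : a = ∞
  · exact hainf ▸ le_top
  refine ENNReal.le_of_forall_pos_le_add fun ε hε hafin => ?_
  obtain ⟨n, hn⟩ := ENNReal.exists_inv_nat_lt (a := (ε : ℝ≥0∞)) (by exact_mod_cast hε.ne')
  refine le_trans (hc n).2 (add_le_add_right ?_ _)
  refine le_trans ?_ hn.le
  rw [ENNReal.inv_le_inv]
  exact le_self_add


section LSCSup
variable {Z : Type*} [MetricSpace Z]

/-- Lipschitz-type lower approximations of an LSC function. -/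
noncomputable def lscApprox (g : Z → ℝ≥0∞) (n : ℕ) (x : Z) : ℝ≥0∞ :=
  ⨅ y, (min (g y) n + n * edist x y)

lemma lscApprox_le (g : Z → ℝ≥0∞) (n : ℕ) (x : Z) : lscApprox g n x ≤ g x := by
  refine le_trans (iInf_le _ x) ?_
  simp [min_le_left]

lemma lscApprox_le_nat (g : Z → ℝ≥0∞) (n : ℕ) (x : Z) : lscApprox g n x ≤ n := by
  refine le_trans (iInf_le _ x) ?_
  simp [min_le_right]

lemma lscApprox_mono (g : Z → ℝ≥0∞) (x : Z) : Monotone fun n => lscApprox g n x := by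
  intro m n hmn
  refine iInf_mono fun y => add_le_add (min_le_min le_rfl (by exact_mod_cast hmn))
    (mul_le_mul' (by exact_mod_cast hmn) le_rfl)

lemma lscApprox_key (g : Z → ℝ≥0∞) (n : ℕ) (x x' : Z) :
    lscApprox g n x ≤ lscApprox g n x' + n * edist x x' := by
  rw [← tsub_le_iff_right]
  refine le_iInf fun y => ?_
  rw [tsub_le_iff_right]
  calc lscApprox g n x ≤ min (g y) n + n * edist x y := iInf_le _ y
    _ ≤ min (g y) n + n * (edist x x' + edist x' y) := by
        gcongr; exact edist_triangle _ _ _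
    _ = min (g y) n + n * edist x' y + n * edist x x' := by ring
    _ ≤ _ := le_rfl

lemma lscApprox_continuous (g : Z → ℝ≥0∞) (n : ℕ) : Continuous (lscApprox g n) := by
  rw [continuous_iff_continuousAt]
  intro x
  have key := lscApprox_key g n
  refine tendsto_order.2 ⟨fun a ha => ?_, fun b hb => ?_⟩
  · obtain ⟨m, ham, hmx⟩ := exists_between ha
    have hmtop : m ≠ ∞ :=
      ((hmx.trans_le (lscApprox_le_nat g n x)).trans (ENNReal.natCast_lt_top n)).ne
    set ε := (m - a) / ((n : ℝ≥0∞) + 1) with hεdef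
    have hε : 0 < ε := ENNReal.div_pos (tsub_pos_of_lt ham).ne' (by simp)
    filter_upwards [EMetric.ball_mem_nhds x hε] with x' hx'
    by_contra hcon
    push_neg at hcon
    have h1 : lscApprox g n x ≤ a + (m - a) := by
      refine le_trans (key x x') ?_
      refine add_le_add hcon ?_
      calc (n : ℝ≥0∞) * edist x x' ≤ ((n : ℝ≥0∞) + 1) * ε := by
            rw [edist_comm]
            exact mul_le_mul' le_self_add hx'.le
        _ = m - a := ENNReal.mul_div_cancel' (by simp) (by simp)
    rw [add_tsub_cancel_of_le ham.le] at h1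
    exact absurd (lt_of_lt_of_le hmx h1) (lt_irrefl _)
  · obtain ⟨m, hxm, hmb⟩ := exists_between hb
    have hmtop : m ≠ ∞ := hmb.ne_top
    set ε := (m - lscApprox g n x) / ((n : ℝ≥0∞) + 1) with hεdef
    have hε : 0 < ε := ENNReal.div_pos (tsub_pos_of_lt hxm).ne' (by simp)
    filter_upwards [EMetric.ball_mem_nhds x hε] with x' hx'
    have h1 : lscApprox g n x' ≤ lscApprox g n x + (m - lscApprox g n x) := by
      refine le_trans (key x' x) ?_
      gcongr
      calc (n : ℝ≥0∞) * edist x' x ≤ ((n : ℝ≥0∞) + 1) * ε :=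
            mul_le_mul' le_self_add hx'.le
        _ = m - lscApprox g n x := ENNReal.mul_div_cancel' (by simp) (by simp)
    rw [add_tsub_cancel_of_le hxm.le] at h1
    exact lt_of_le_of_lt h1 hmb

end LSCSup

lemma lscApprox_iSup {Z : Type*} [MetricSpace Z] {g : Z → ℝ≥0∞}
    (hg : LowerSemicontinuous g) (x : Z) : ⨆ n, lscApprox g n x = g x := by
  refine le_antisymm (iSup_le fun n => lscApprox_le g n x) (le_of_forall_lt fun a ha => ?_)
  obtain ⟨a', haa', ha'x⟩ := exists_between ha
  have ha'top : a' ≠ ∞ := (lt_of_lt_of_le ha'x le_top).ne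
  have hev : {y | a' < g y} ∈ nhds x := hg x a' ha'x
  obtain ⟨ε, hε, hball⟩ := EMetric.mem_nhds_iff.mp hev
  obtain ⟨n₁, hn₁⟩ := ENNReal.exists_nat_gt ha'top
  have hdiv : a' / ε ≠ ∞ := by
    intro h
    rw [ENNReal.div_eq_top] at h
    rcases h with ⟨_, h⟩ | ⟨h, _⟩
    · exact hε.ne' h
    · exact ha'top h
  obtain ⟨n₂, hn₂⟩ := ENNReal.exists_nat_gt hdiv
  have hn₂' : a' ≤ (n₂ : ℝ≥0∞) * ε := by
    rcases eq_or_ne ε ∞ with rfl | hεtop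
    · have h0 : (n₂ : ℝ≥0∞) ≠ 0 := by
        simp only [ENNReal.div_top] at hn₂
        exact hn₂.ne'
      rw [ENNReal.mul_top h0]; exact le_top
    · have := (ENNReal.div_lt_iff (Or.inl hε.ne') (Or.inl hεtop)).mp hn₂
      exact this.le
  set n : ℕ := max n₁ n₂ with hn
  refine lt_of_lt_of_le (lt_of_lt_of_le haa' ?_) (le_iSup (fun n => lscApprox g n x) n)
  refine le_iInf fun y => ?_
  rcases lt_or_ge (edist x y) ε with hy | hy
  · have h1 : a' < g y := hball (by rwa [EMetric.mem_ball, edist_comm])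
    have h2 : a' ≤ min (g y) n := by
      refine le_min h1.le ?_
      exact le_trans hn₁.le (by exact_mod_cast Nat.cast_le.mpr (le_max_left n₁ n₂))
    exact le_trans h2 le_self_add
  · have h2 : a' ≤ (n : ℝ≥0∞) * edist x y := by
      refine le_trans hn₂' (mul_le_mul' ?_ hy)
      exact_mod_cast Nat.cast_le.mpr (le_max_right n₁ n₂)
    exact le_trans h2 le_add_self

lemma lsc_lintegral {Z : Type*} [MetricSpace Z] [MeasurableSpace Z] [BorelSpace Z]
    {P : Type*} [TopologicalSpace P] (q : P → ProbabilityMeasure Z) (hq : Continuous q)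
    {g : Z → ℝ≥0∞} (hg : LowerSemicontinuous g) :
    LowerSemicontinuous fun p => ∫⁻ z, g z ∂(q p : Measure Z) := by
  have hfin : ∀ n x, lscApprox g n x ≠ ∞ := fun n x =>
    ((lscApprox_le_nat g n x).trans_lt (ENNReal.natCast_lt_top n)).ne
  have hcont : ∀ n : ℕ, Continuous fun x => (lscApprox g n x).toNNReal := fun n =>
    ENNReal.continuousOn_toNNReal.comp_continuous (lscApprox_continuous g n) (hfin n)
  have hle : ∀ (n : ℕ) (x : Z), ((lscApprox g n x).toNNReal : ℝ) ≤ n := by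
    intro n x
    have : (lscApprox g n x).toNNReal ≤ ((n : ℝ≥0∞)).toNNReal :=
      ENNReal.toNNReal_mono (by simp) (lscApprox_le_nat g n x)
    have h' : (lscApprox g n x).toNNReal ≤ (n : ℝ≥0) := by simpa using this
    exact_mod_cast h'
  set f : ℕ → BoundedContinuousFunction Z ℝ≥0 := fun n =>
    BoundedContinuousFunction.mkOfBound ⟨fun x => (lscApprox g n x).toNNReal, hcont n⟩ n
      (fun x y => by
        rw [NNReal.dist_eq, abs_sub_le_iff]
        simp only [ContinuousMap.coe_mk]
        constructor
        · have h1 := hle n x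
          have h2 : (0:ℝ) ≤ ((lscApprox g n y).toNNReal : ℝ) := NNReal.coe_nonneg _
          linarith
        · have h1 := hle n y
          have h2 : (0:ℝ) ≤ ((lscApprox g n x).toNNReal : ℝ) := NNReal.coe_nonneg _
          linarith) with hf
  have hcoe : ∀ (n : ℕ) (x : Z), ((f n x : ℝ≥0) : ℝ≥0∞) = lscApprox g n x := fun n x =>
    ENNReal.coe_toNNReal (hfin n x)
  have hkey : ∀ μ : Measure Z, IsProbabilityMeasure μ → ∫⁻ z, g z ∂μ = ⨆ n, ∫⁻ z, (f n z : ℝ≥0∞) ∂μ := by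
    intro μ _
    rw [← lintegral_iSup]
    · refine lintegral_congr fun x => ?_
      simp_rw [hcoe]
      exact (lscApprox_iSup hg x).symm
    · exact fun n => (ENNReal.continuous_coe.comp (hcont n)).measurable
    · intro m k hmk x
      simp_rw [hcoe]
      exact lscApprox_mono g x hmk
  have hC : ∀ n : ℕ, Continuous fun p => ∫⁻ z, (f n z : ℝ≥0∞) ∂(q p : Measure Z) := by
    intro n
    rw [continuous_iff_continuousAt]
    intro p
    exact (MeasureTheory.ProbabilityMeasure.tendsto_iff_forall_lintegral_tendsto.mp
      (hq.tendsto p)) (f n)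
  have : (fun p => ∫⁻ z, g z ∂(q p : Measure Z))
      = fun p => ⨆ n, ∫⁻ z, (f n z : ℝ≥0∞) ∂(q p : Measure Z) := by
    funext p
    exact hkey (q p : Measure Z) (q p).2
  rw [this]
  exact lowerSemicontinuous_iSup fun n => (hC n).lowerSemicontinuous



lemma exists_measurable_argmin {Z C : Type*} [TopologicalSpace Z] [MeasurableSpace Z]
    [BorelSpace Z] [MetricSpace C] [CompactSpace C] [Nonempty C] [MeasurableSpace C]
    [BorelSpace C] (V : Z × C → ℝ≥0∞) (hV : LowerSemicontinuous V) :
    ∃ κ : Z → C, Measurable κ ∧ ∀ z, V (z, κ z) = ⨅ y : C, V (z, y) := by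
  obtain ⟨u, hu⟩ := TopologicalSpace.exists_dense_seq C
  set J : Z → ℝ≥0∞ := fun z => ⨅ y : C, V (z, y) with hJdef
  set r : ℕ → ℝ := fun k => (1/2 : ℝ) ^ k with hrdef
  have hrpos : ∀ k, 0 < r k := fun k => by positivity
  set m : ℕ → ℕ → Z → ℝ≥0∞ := fun n k z => ⨅ y ∈ Metric.closedBall (u n) (r k), V (z, y)
    with hmdef
  have hJlsc : LowerSemicontinuous J := by
    have h := lsc_biInf_compact (K := (Set.univ : Set C)) hV isCompact_univ
    simpa only [iInf_univ] using h
  have hJm : Measurable J := hJlsc.measurable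
  have hmm : ∀ n k, Measurable (m n k) := fun n k =>
    (lsc_biInf_compact hV (Metric.isClosed_closedBall.isCompact)).measurable
  have hJle : ∀ n k z, J z ≤ m n k z := fun n k z => le_iInf₂ fun y _ => iInf_le _ y
  set Φ : Z → ℕ → ℕ → Prop := fun z k n => m n k z = J z with hΦdef
  have hΦmeas : ∀ k n, MeasurableSet {z | Φ z k n} := by
    intro k n
    have : {z | Φ z k n} = {z | m n k z ≤ J z} ∩ {z | J z ≤ m n k z} := by
      ext z; simp only [hΦdef, mem_setOf_eq, mem_inter_iff, le_antisymm_iff]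
    rw [this]
    exact (measurableSet_le (hmm n k) hJm).inter (measurableSet_le hJm (hmm n k))
  have hVz : ∀ z : Z, LowerSemicontinuous fun y => V (z, y) := by
    intro z y a ha
    exact ((Continuous.prodMk_right z).tendsto y).eventually (hV (z, y) a ha)
  have hattain : ∀ (z : Z) (K : Set C), IsCompact K → IsClosed K → K.Nonempty →
      ∃ c ∈ K, V (z, c) = ⨅ y ∈ K, V (z, y) := fun z K hK hKc h0 =>
    exists_min_lsc (hVz z) hK hKc h0
  have hex0 : ∀ z, ∃ n, Φ z 0 n := by
    intro z
    obtain ⟨c, -, hc⟩ := hattain z univ isCompact_univ isClosed_univ univ_nonempty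
    obtain ⟨n, hn⟩ := hu.exists_dist_lt c (hrpos 0)
    refine ⟨n, le_antisymm ?_ (hJle n 0 z)⟩
    calc m n 0 z ≤ V (z, c) := iInf₂_le c (by
          rw [Metric.mem_closedBall]; exact hn.le)
      _ = ⨅ y ∈ univ, V (z, y) := hc
      _ = J z := by simp only [iInf_univ]; rfl
  have hstep : ∀ z k nold, Φ z k nold →
      ∃ n, Φ z (k+1) n ∧ dist (u n) (u nold) ≤ r k + r (k+1) := by
    intro z k nold hΦn
    have hball : IsCompact (Metric.closedBall (u nold) (r k)) :=
      Metric.isClosed_closedBall.isCompact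
    have hballne : (Metric.closedBall (u nold) (r k)).Nonempty :=
      ⟨u nold, Metric.mem_closedBall_self (hrpos k).le⟩
    obtain ⟨c, hcmem, hc⟩ := hattain z _ hball Metric.isClosed_closedBall hballne
    obtain ⟨n, hn⟩ := hu.exists_dist_lt c (hrpos (k+1))
    refine ⟨n, le_antisymm ?_ (hJle n (k+1) z), ?_⟩
    · calc m n (k+1) z ≤ V (z, c) := iInf₂_le c (by
            rw [Metric.mem_closedBall]; exact hn.le)
        _ = m nold k z := hc
        _ = J z := hΦn
    · calc dist (u n) (u nold) ≤ dist (u n) c + dist c (u nold) := dist_triangle _ _ _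
        _ ≤ r (k+1) + r k := add_le_add (by rw [dist_comm]; exact hn.le)
            (Metric.mem_closedBall.mp hcmem)
        _ = r k + r (k+1) := add_comm _ _
  set P : ℕ → ℕ → ℕ → Z → Prop := fun k nold n z =>
    (Φ z (k+1) n ∧ dist (u n) (u nold) ≤ r k + r (k+1)) ∨
      ¬ ∃ n', Φ z (k+1) n' ∧ dist (u n') (u nold) ≤ r k + r (k+1) with hPdef
  have hPex : ∀ k nold z, ∃ n, P k nold n z := by
    intro k nold z
    by_cases h : ∃ n', Φ z (k+1) n' ∧ dist (u n') (u nold) ≤ r k + r (k+1)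
    · obtain ⟨n, hn⟩ := h; exact ⟨n, Or.inl hn⟩
    · exact ⟨0, Or.inr h⟩
  have hand : ∀ k nold n, MeasurableSet {z | Φ z (k+1) n ∧
      dist (u n) (u nold) ≤ r k + r (k+1)} := by
    intro k nold n
    by_cases hd : dist (u n) (u nold) ≤ r k + r (k+1)
    · simp only [hd, and_true]; exact hΦmeas (k+1) n
    · simp only [hd, and_false, setOf_false]; exact MeasurableSet.empty
  have hPmeas : ∀ k nold n, MeasurableSet {z | P k nold n z} := by
    intro k nold n
    have h2 : MeasurableSet {z | ¬∃ n', Φ z (k+1) n' ∧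
        dist (u n') (u nold) ≤ r k + r (k+1)} := by
      have : {z | ¬∃ n', Φ z (k+1) n' ∧ dist (u n') (u nold) ≤ r k + r (k+1)} =
          (⋃ n', {z | Φ z (k+1) n' ∧ dist (u n') (u nold) ≤ r k + r (k+1)})ᶜ := by
        ext z; simp only [mem_compl_iff, mem_iUnion, mem_setOf_eq, not_exists]
      rw [this]
      exact (MeasurableSet.iUnion fun n' => hand k nold n').compl
    have : {z | P k nold n z} = {z | Φ z (k+1) n ∧ dist (u n) (u nold) ≤ r k + r (k+1)}
        ∪ {z | ¬∃ n', Φ z (k+1) n' ∧ dist (u n') (u nold) ≤ r k + r (k+1)} := by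
      ext z; simp only [hPdef, mem_setOf_eq, mem_union]
    rw [this]
    exact (hand k nold n).union h2
  let g : ℕ → Z → ℕ := fun k => Nat.rec (motive := fun _ => Z → ℕ)
    (fun z => Nat.find (hex0 z)) (fun k gk z => Nat.find (hPex k (gk z) z)) k
  have hgS : ∀ k z, g (k+1) z = Nat.find (hPex k (g k z) z) := fun k z => rfl
  have hinv : ∀ k z, Φ z k (g k z) := by
    intro k
    induction k with
    | zero => exact fun z => Nat.find_spec (hex0 z)
    | succ k ih =>
      intro z
      have hex := hstep z k _ (ih z)
      rcases Nat.find_spec (hPex k (g k z) z) with h | h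
      · exact h.1
      · exact absurd hex h
  have hdist : ∀ k z, dist (u (g (k+1) z)) (u (g k z)) ≤ r k + r (k+1) := by
    intro k z
    have hex := hstep z k _ (hinv k z)
    rcases Nat.find_spec (hPex k (g k z) z) with h | h
    · exact h.2
    · exact absurd hex h
  have hgmeas : ∀ k, Measurable (g k) := by
    intro k
    induction k with
    | zero => exact measurable_find _ (fun n => hΦmeas 0 n)
    | succ k ih =>
      have hfix : ∀ nold : ℕ, Measurable fun z => Nat.find (hPex k nold z) :=
        fun nold => measurable_find _ (fun n => hPmeas k nold n)
      apply measurable_to_countable'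
      intro j
      have : (g (k+1)) ⁻¹' {j} =
          ⋃ nold, ((g k) ⁻¹' {nold}) ∩ ((fun z => Nat.find (hPex k nold z)) ⁻¹' {j}) := by
        ext z
        simp only [mem_preimage, mem_singleton_iff, mem_iUnion, mem_inter_iff, hgS]
        constructor
        · intro h; exact ⟨g k z, rfl, h⟩
        · rintro ⟨nold, h1, h2⟩
          subst h1; exact h2
      rw [this]
      exact MeasurableSet.iUnion fun nold =>
        (ih (measurableSet_singleton nold)).inter (hfix nold (measurableSet_singleton j))
  have hcauchy : ∀ z, CauchySeq fun k => u (g k z) := by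
    intro z
    refine cauchySeq_of_le_geometric (1/2) 2 (by norm_num) fun k => ?_
    rw [dist_comm]
    calc dist (u (g (k+1) z)) (u (g k z)) ≤ r k + r (k+1) := hdist k z
      _ ≤ 2 * (1/2)^k := by
          rw [hrdef]
          have : (0:ℝ) < (1/2:ℝ)^k := by positivity
          calc (1/2:ℝ)^k + (1/2)^(k+1) ≤ (1/2)^k + (1/2)^k := by
                have : ((1:ℝ)/2)^(k+1) ≤ (1/2)^k :=
                  pow_le_pow_of_le_one (by norm_num) (by norm_num) (Nat.le_succ k)
                linarith
            _ = 2 * (1/2)^k := by ring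
  have hlim : ∀ z, ∃ c, Tendsto (fun k => u (g k z)) atTop (nhds c) :=
    fun z => cauchySeq_tendsto_of_complete (hcauchy z)
  set κ : Z → C := fun z => (hlim z).choose with hκdef
  have hκlim : ∀ z, Tendsto (fun k => u (g k z)) atTop (nhds (κ z)) :=
    fun z => (hlim z).choose_spec
  have hκmeas : Measurable κ := by
    refine measurable_of_tendsto_metrizable (f := fun k z => u (g k z)) (g := κ)
      (fun k => measurable_from_top.comp (hgmeas k)) ?_
    exact tendsto_pi_nhds.mpr hκlim
  refine ⟨κ, hκmeas, fun z => ?_⟩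
  refine le_antisymm ?_ (iInf_le _ (κ z))
  by_contra hcon
  push_neg at hcon
  have hev : ∀ᶠ y in nhds (κ z), J z < V (z, y) := hVz z (κ z) (J z) hcon
  have hballprop : ∀ k, ∃ c ∈ Metric.closedBall (u (g k z)) (r k),
      V (z, c) = ⨅ y ∈ Metric.closedBall (u (g k z)) (r k), V (z, y) := fun k =>
    hattain z _ Metric.isClosed_closedBall.isCompact Metric.isClosed_closedBall
      ⟨u (g k z), Metric.mem_closedBall_self (hrpos k).le⟩
  choose cfun hcmem hcval using hballprop
  have hck : ∀ k, V (z, cfun k) = J z := fun k => (hcval k).trans (hinv k z)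
  have hctend : Tendsto cfun atTop (nhds (κ z)) := by
    rw [tendsto_iff_dist_tendsto_zero]
    have hb : ∀ k, dist (cfun k) (κ z) ≤ r k + dist (u (g k z)) (κ z) := by
      intro k
      calc dist (cfun k) (κ z) ≤ dist (cfun k) (u (g k z)) + dist (u (g k z)) (κ z) :=
            dist_triangle _ _ _
        _ ≤ r k + dist (u (g k z)) (κ z) :=
            add_le_add (Metric.mem_closedBall.mp (hcmem k)) le_rfl
    refine squeeze_zero (fun k => dist_nonneg) hb ?_
    have h1 : Tendsto r atTop (nhds 0) := by
      rw [hrdef]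
      exact tendsto_pow_atTop_nhds_zero_of_lt_one (by norm_num) (by norm_num)
    have h2 : Tendsto (fun k => dist (u (g k z)) (κ z)) atTop (nhds 0) :=
      tendsto_iff_dist_tendsto_zero.mp (hκlim z)
    simpa using h1.add h2
  obtain ⟨k, hk⟩ := (hctend.eventually hev).exists
  rw [hck k] at hk
  exact lt_irrefl _ hk


lemma lsc_lintegral' {Z : Type*} [TopologicalSpace Z] [MetrizableSpace Z]
    [MeasurableSpace Z] [BorelSpace Z] {P : Type*} [TopologicalSpace P]
    (q : P → ProbabilityMeasure Z) (hq : Continuous q)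
    {g : Z → ℝ≥0∞} (hg : LowerSemicontinuous g) :
    LowerSemicontinuous fun p => ∫⁻ z, g z ∂(q p : Measure Z) := by
  letI : MetricSpace Z := TopologicalSpace.metrizableSpaceMetric Z
  haveI : BorelSpace Z := by assumption
  exact lsc_lintegral q hq hg

/-- Backward dynamic programming for the belief-space MDP: with lower semicontinuous
`[0,∞]`-valued costs, weakly continuous transition kernels `q̃_{t+1} : Z × C → P(Z)`,
a compact metric control space `C`, a set `T_u` of optimization times and default control `u0`,
the value functions `J_t` defined by `J_N = c̃_N`,
`V_t(z,u) = c̃_t(z,u) + ∫ J_{t+1} dq̃_{t+1}(z,u)`, `J_t = inf_u V_t` on `T_u` and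
`J_t = V_t(·,u0)` off `T_u`, are lower semicontinuous, and measurable selectors
`κ_t` with `V_t(z,κ_t(z)) = J_t(z)` (and `κ_t ≡ u0` off `T_u`) exist. -/
theorem stmt_11 (Z C : Type*)
    [TopologicalSpace Z] [MetrizableSpace Z] [SeparableSpace Z]
    [MeasurableSpace Z] [BorelSpace Z]
    [MetricSpace C] [CompactSpace C] [MeasurableSpace C] [BorelSpace C]
    (N : ℕ) (Tu : Set ℕ) (hTu : Tu ⊆ Set.Iio N) (u0 : C)
    (c : ℕ → Z → C → ENNReal) (cN : Z → ENNReal)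
    (hc : ∀ t < N, LowerSemicontinuous fun p : Z × C => c t p.1 p.2)
    (hcN : LowerSemicontinuous cN)
    (q : ℕ → Z → C → ProbabilityMeasure Z)
    (hq : ∀ t < N, Continuous fun p : Z × C => q t p.1 p.2)
    (J : ℕ → Z → ENNReal) (V : ℕ → Z → C → ENNReal)
    (hJN : ∀ z, J N z = cN z)
    (hV : ∀ t < N, ∀ z u, V t z u = c t z u + ∫⁻ z', J (t + 1) z' ∂(q t z u : Measure Z))
    (hJ : ∀ t < N, ∀ z, J t z = if t ∈ Tu then ⨅ u : C, V t z u else V t z u0) :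
    (∀ t ≤ N, LowerSemicontinuous (J t)) ∧
    (∀ t < N, ∃ κ : Z → C, Measurable κ ∧ (∀ z, V t z (κ z) = J t z) ∧
      (t ∉ Tu → ∀ z, κ z = u0)) := by
  haveI : Nonempty C := ⟨u0⟩
  have hVlsc : ∀ t, t < N → LowerSemicontinuous (J (t+1)) →
      LowerSemicontinuous fun p : Z × C => V t p.1 p.2 := by
    intro t ht hJ1
    have h1 : (fun p : Z × C => V t p.1 p.2)
        = fun p : Z × C => c t p.1 p.2 + ∫⁻ z', J (t+1) z' ∂(q t p.1 p.2 : Measure Z) := by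
      funext p; exact hV t ht p.1 p.2
    rw [h1]
    exact (hc t ht).add (lsc_lintegral' (fun p : Z × C => q t p.1 p.2) (hq t ht) hJ1)
  have hJfromV : ∀ t, t < N → LowerSemicontinuous (fun p : Z × C => V t p.1 p.2) →
      LowerSemicontinuous (J t) := by
    intro t ht hVl
    by_cases htu : t ∈ Tu
    · have h2 : J t = fun z => ⨅ u ∈ (Set.univ : Set C), V t z u := by
        funext z; rw [hJ t ht z, if_pos htu, iInf_univ]
      rw [h2]
      exact lsc_biInf_compact (V := fun p : Z × C => V t p.1 p.2) hVl isCompact_univ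
    · have h2 : J t = fun z => V t z u0 := by
        funext z; rw [hJ t ht z, if_neg htu]
      rw [h2]
      intro z a ha
      exact (((continuous_id.prodMk continuous_const)).tendsto z).eventually
        (hVl (z, u0) a ha)
  have lscJ : ∀ k, k ≤ N → LowerSemicontinuous (J (N - k)) := by
    intro k
    induction k with
    | zero =>
      intro _
      have hh : J N = cN := funext hJN
      rw [Nat.sub_zero, hh]
      exact hcN
    | succ k ih =>
      intro hk
      have hk' : k ≤ N := Nat.le_of_succ_le hk
      have htN : N - (k+1) < N := by omega
      have ht1 : N - (k+1) + 1 = N - k := by omega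
      have hJ1 : LowerSemicontinuous (J (N - (k+1) + 1)) := by rw [ht1]; exact ih hk'
      exact hJfromV _ htN (hVlsc _ htN hJ1)
  have lscJ' : ∀ t, t ≤ N → LowerSemicontinuous (J t) := by
    intro t ht
    have h := lscJ (N - t) (by omega)
    rwa [show N - (N - t) = t by omega] at h
  refine ⟨lscJ', ?_⟩
  intro t ht
  have hVl : LowerSemicontinuous fun p : Z × C => V t p.1 p.2 :=
    hVlsc t ht (lscJ' (t+1) (by omega))
  by_cases htu : t ∈ Tu
  · obtain ⟨κ, hκm, hκ⟩ := exists_measurable_argmin (fun p : Z × C => V t p.1 p.2) hVl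
    refine ⟨κ, hκm, fun z => ?_, fun h => absurd htu h⟩
    rw [hJ t ht z, if_pos htu]
    exact hκ z
  · exact ⟨fun _ => u0, measurable_const,
      fun z => by rw [hJ t ht z, if_neg htu], fun _ _ => rfl⟩
end

section
/- Let Z be a standard Borel separable metrizable space, C a compact metric space, N ∈ ℕ, T_u ⊆ {0,…,N−1}, 𝐮 ∈ C, costs c̃_t : Z × C → [0,∞] (t < N) and c̃_N : Z → [0,∞] lower semicontinuous, and q̃_{t+1} : Z × C → P(Z) weakly continuous Borel-measurable probability kernels. Let J_t, V_t, and the Borel measurable selectors κ_t : Z → C (with κ_t ≡ 𝐮 for t ∉ T_u) be as produced by the backward recursion J_N = c̃_N, V_t(z,u) = c̃_t(z,u) + ∫_Z J_{t+1} dq̃_{t+1}(z,u), J_t(z) = inf_{u∈C} V_t(z,u) for t ∈ T_u and J_t(z) = V_t(z,𝐮) otherwise. Call a Markov policy any tuple π = (π_0,…,π_{N−1}) of Borel-measurable probability kernels π_t from Z to C satisfying π_t(·|z) = δ_𝐮 for all t ∉ T_u and z ∈ Z. Given an initial distribution p₀ ∈ P(Z), let P^π_{p₀} be the unique probability measure on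 the trajectory space (Z × C)^N × Z under which Z_0 ∼ p₀, U_t | Z_0,U_0,…,Z_t ∼ π_t(·|Z_t), and Z_{t+1} | Z_0,U_0,…,Z_t,U_t ∼ q̃_{t+1}(Z_t,U_t) (obtained by finitely many iterated compositions of these kernels). Then for every Markov policy π, E^π_{p₀}[ Σ_{t=0}^{N−1} c̃_t(Z_t,U_t) + c̃_N(Z_N) ] ≥ ∫_Z J_0 dp₀, and the deterministic policy π* = (δ_{κ_0},…,δ_{κ_{N−1}}) achieves equality: E^{π*}_{p₀}[ Σ_{t=0}^{N−1} c̃_t(Z_t,U_t) + c̃_N(Z_N) ] = ∫_Z J_0 dp₀. Hence π* is optimal among Markov policies. -/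
open MeasureTheory TopologicalSpace ProbabilityTheory
open scoped Classical ProbabilityTheory ENNReal

/-- The time-`t` marginal law of the belief-state process: `m_0 = p₀` and
`m_{t+1} = (m_t ⊗ π_t).bind q̃_{t+1}`, obtained by finitely many iterated compositions of the
policy kernels `π_t` and the transition kernels `q̃_{t+1}`. -/
noncomputable def stateMarginal {Z C : Type*} [MeasurableSpace Z] [MeasurableSpace C]
    (p0 : Measure Z) (π : ℕ → Kernel Z C) (q : ℕ → Z → C → Measure Z) : ℕ → Measure Z
  | 0 => p0
  | t + 1 => ((stateMarginal p0 π q t) ⊗ₘ (π t)).bind fun p => q t p.1 p.2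

/-- The expected total cost `E^π_{p₀}[ Σ_{t<N} c̃_t(Z_t,U_t) + c̃_N(Z_N) ]` of a Markov policy
`π`, written via the laws `m_t ⊗ π_t` of the state–control pairs `(Z_t, U_t)` and the law
`m_N` of `Z_N`. -/
noncomputable def expectedTotalCost {Z C : Type*} [MeasurableSpace Z] [MeasurableSpace C]
    (N : ℕ) (p0 : Measure Z) (π : ℕ → Kernel Z C) (q : ℕ → Z → C → Measure Z)
    (c : ℕ → Z → C → ENNReal) (cN : Z → ENNReal) : ENNReal :=
  (∑ t ∈ Finset.range N,
      ∫⁻ p : Z × C, c t p.1 p.2 ∂((stateMarginal p0 π q t) ⊗ₘ (π t))) +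
    ∫⁻ z, cN z ∂(stateMarginal p0 π q N)

/-- Policy synthesis for the finite-horizon belief-space MDP: every Markov policy `π`
(with `π_t = δ_{u0}` off the optimization times `T_u`) has expected total cost at least
`∫ J_0 dp₀`, and the deterministic policy `π* = (δ_{κ_0}, …, δ_{κ_{N−1}})` built from the
dynamic-programming selectors `κ_t` achieves this value; hence `π*` is optimal. -/
theorem stmt_12 (Z C : Type*)
    [TopologicalSpace Z] [MetrizableSpace Z] [SeparableSpace Z]
    [MeasurableSpace Z] [BorelSpace Z] [StandardBorelSpace Z]
    [MetricSpace C] [CompactSpace C] [MeasurableSpace C] [BorelSpace C]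
    (N : ℕ) (Tu : Set ℕ) (hTu : Tu ⊆ Set.Iio N) (u0 : C)
    (c : ℕ → Z → C → ENNReal) (cN : Z → ENNReal)
    (hc : ∀ t < N, LowerSemicontinuous fun p : Z × C => c t p.1 p.2)
    (hcN : LowerSemicontinuous cN)
    (q : ℕ → Z → C → ProbabilityMeasure Z)
    (hq_cont : ∀ t < N, Continuous fun p : Z × C => q t p.1 p.2)
    (hq_meas : ∀ t < N, Measurable fun p : Z × C => (q t p.1 p.2 : Measure Z))
    (J : ℕ → Z → ENNReal) (V : ℕ → Z → C → ENNReal)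
    (hJN : ∀ z, J N z = cN z)
    (hV : ∀ t < N, ∀ z u, V t z u = c t z u + ∫⁻ z', J (t + 1) z' ∂(q t z u : Measure Z))
    (hJ : ∀ t < N, ∀ z, J t z = if t ∈ Tu then ⨅ u : C, V t z u else V t z u0)
    (κ : ℕ → Z → C) (hκ_meas : ∀ t < N, Measurable (κ t))
    (hκ_opt : ∀ t < N, ∀ z, V t z (κ t z) = J t z)
    (hκ_default : ∀ t < N, t ∉ Tu → ∀ z, κ t z = u0)
    (p0 : Measure Z) [IsProbabilityMeasure p0] :
    (∀ π : ℕ → Kernel Z C, (∀ t < N, IsMarkovKernel (π t)) →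
      (∀ t < N, t ∉ Tu → ∀ z, (π t) z = Measure.dirac u0) →
      ∫⁻ z, J 0 z ∂p0 ≤
        expectedTotalCost N p0 π (fun t z u => (q t z u : Measure Z)) c cN) ∧
    expectedTotalCost N p0
        (fun t => if h : t < N then Kernel.deterministic (κ t) (hκ_meas t h)
          else Kernel.deterministic (fun _ => u0) measurable_const)
        (fun t z u => (q t z u : Measure Z)) c cN =
      ∫⁻ z, J 0 z ∂p0 := by
  classical
  set q' : ℕ → Z → C → Measure Z := fun t z u => (q t z u : Measure Z) with hq'def
  have hq'_meas : ∀ t < N, Measurable fun p : Z × C => q' t p.1 p.2 := hq_meas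
  have hc_meas : ∀ t < N, Measurable fun p : Z × C => c t p.1 p.2 :=
    fun t ht => (hc t ht).measurable
  -- measurability of the value functions
  have hJ_meas_aux : ∀ k t, t + k = N → Measurable (J t) := by
    intro k
    induction k with
    | zero =>
      intro t ht
      have htN : t = N := by omega
      have : J t = cN := by funext z; rw [htN]; exact hJN z
      rw [this]; exact hcN.measurable
    | succ k ih =>
      intro t ht
      have htN : t < N := by omega
      have hJ1 : Measurable (J (t + 1)) := ih (t + 1) (by omega)
      have hVm : Measurable (fun p : Z × C => V t p.1 p.2) := by
        have heq : (fun p : Z × C => V t p.1 p.2)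
            = fun p : Z × C => c t p.1 p.2 + ∫⁻ z', J (t + 1) z' ∂(q' t p.1 p.2) := by
          funext p; exact hV t htN p.1 p.2
        rw [heq]
        exact (hc_meas t htN).add ((Measure.measurable_lintegral hJ1).comp (hq'_meas t htN))
      have : J t = fun z => V t z (κ t z) := by
        funext z; exact (hκ_opt t htN z).symm
      rw [this]
      exact hVm.comp (measurable_id.prodMk (hκ_meas t htN))
  have hJ_meas : ∀ t, t ≤ N → Measurable (J t) := fun t ht =>
    hJ_meas_aux (N - t) t (by omega)
  have hV_meas : ∀ t < N, Measurable fun p : Z × C => V t p.1 p.2 := by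
    intro t ht
    have heq : (fun p : Z × C => V t p.1 p.2)
        = fun p : Z × C => c t p.1 p.2 + ∫⁻ z', J (t + 1) z' ∂(q' t p.1 p.2) := by
      funext p; exact hV t ht p.1 p.2
    rw [heq]
    exact (hc_meas t ht).add
      ((Measure.measurable_lintegral (hJ_meas (t + 1) (by omega))).comp (hq'_meas t ht))
  -- the marginals are probability measures
  have hm_prob : ∀ (π : ℕ → Kernel Z C), (∀ t < N, IsMarkovKernel (π t)) →
      ∀ t, t ≤ N → IsProbabilityMeasure (stateMarginal p0 π q' t) := by
    intro π hπ t
    induction t with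
    | zero => intro _; simpa [stateMarginal] using ‹IsProbabilityMeasure p0›
    | succ t ih =>
      intro ht
      haveI := ih (by omega)
      haveI := hπ t (by omega)
      constructor
      have hb : stateMarginal p0 π q' (t + 1)
          = ((stateMarginal p0 π q' t) ⊗ₘ (π t)).bind fun p => q' t p.1 p.2 := rfl
      rw [hb, Measure.bind_apply MeasurableSet.univ (hq'_meas t (by omega)).aemeasurable]
      simp [hq'def]
  -- key inequality by backwards induction
  have keyLe : ∀ (π : ℕ → Kernel Z C), (∀ t < N, IsMarkovKernel (π t)) →
      (∀ t < N, ∀ z, J t z ≤ ∫⁻ u, V t z u ∂(π t z)) →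
      ∀ k t, t + k = N →
        ∫⁻ z, J t z ∂(stateMarginal p0 π q' t) ≤
          (∑ s ∈ Finset.Ico t N,
            ∫⁻ p : Z × C, c s p.1 p.2 ∂((stateMarginal p0 π q' s) ⊗ₘ (π s))) +
          ∫⁻ z, cN z ∂(stateMarginal p0 π q' N) := by
    intro π hπ hpt k
    induction k with
    | zero =>
      intro t ht
      have : t = N := by omega
      subst this
      rw [Finset.Ico_self, Finset.sum_empty, zero_add]
      exact le_of_eq (lintegral_congr hJN)
    | succ k ih =>
      intro t ht
      have htN : t < N := by omega
      haveI := hm_prob π hπ t (le_of_lt htN)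
      haveI := hπ t htN
      have hb : stateMarginal p0 π q' (t + 1)
          = ((stateMarginal p0 π q' t) ⊗ₘ (π t)).bind fun p => q' t p.1 p.2 := rfl
      rw [Finset.sum_eq_sum_Ico_succ_bot htN]
      calc ∫⁻ z, J t z ∂(stateMarginal p0 π q' t)
          ≤ ∫⁻ z, ∫⁻ u, V t z u ∂(π t z) ∂(stateMarginal p0 π q' t) :=
            lintegral_mono (hpt t htN)
        _ = ∫⁻ p : Z × C, V t p.1 p.2 ∂((stateMarginal p0 π q' t) ⊗ₘ (π t)) :=
            (Measure.lintegral_compProd (hV_meas t htN)).symm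
        _ = ∫⁻ p : Z × C, (c t p.1 p.2 + ∫⁻ z', J (t + 1) z' ∂(q' t p.1 p.2))
              ∂((stateMarginal p0 π q' t) ⊗ₘ (π t)) :=
            lintegral_congr fun p => hV t htN p.1 p.2
        _ = (∫⁻ p : Z × C, c t p.1 p.2 ∂((stateMarginal p0 π q' t) ⊗ₘ (π t))) +
              ∫⁻ p : Z × C, (∫⁻ z', J (t + 1) z' ∂(q' t p.1 p.2))
                ∂((stateMarginal p0 π q' t) ⊗ₘ (π t)) :=
            lintegral_add_left (hc_meas t htN) _
        _ = (∫⁻ p : Z × C, c t p.1 p.2 ∂((stateMarginal p0 π q' t) ⊗ₘ (π t))) +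
              ∫⁻ z, J (t + 1) z ∂(stateMarginal p0 π q' (t + 1)) := by
            rw [hb, Measure.lintegral_bind (hq'_meas t htN).aemeasurable (hJ_meas (t + 1) (by omega)).aemeasurable]
        _ ≤ (∫⁻ p : Z × C, c t p.1 p.2 ∂((stateMarginal p0 π q' t) ⊗ₘ (π t))) +
              ((∑ s ∈ Finset.Ico (t + 1) N,
                ∫⁻ p : Z × C, c s p.1 p.2 ∂((stateMarginal p0 π q' s) ⊗ₘ (π s))) +
              ∫⁻ z, cN z ∂(stateMarginal p0 π q' N)) :=
            add_le_add_right (ih (t + 1) (by omega)) _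
        _ = _ := (add_assoc _ _ _).symm
  -- key equality by backwards induction
  have keyEq : ∀ (π : ℕ → Kernel Z C), (∀ t < N, IsMarkovKernel (π t)) →
      (∀ t < N, ∀ z, J t z = ∫⁻ u, V t z u ∂(π t z)) →
      ∀ k t, t + k = N →
        ∫⁻ z, J t z ∂(stateMarginal p0 π q' t) =
          (∑ s ∈ Finset.Ico t N,
            ∫⁻ p : Z × C, c s p.1 p.2 ∂((stateMarginal p0 π q' s) ⊗ₘ (π s))) +
          ∫⁻ z, cN z ∂(stateMarginal p0 π q' N) := by
    intro π hπ hpt k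
    induction k with
    | zero =>
      intro t ht
      have : t = N := by omega
      subst this
      rw [Finset.Ico_self, Finset.sum_empty, zero_add]
      exact lintegral_congr hJN
    | succ k ih =>
      intro t ht
      have htN : t < N := by omega
      haveI := hm_prob π hπ t (le_of_lt htN)
      haveI := hπ t htN
      have hb : stateMarginal p0 π q' (t + 1)
          = ((stateMarginal p0 π q' t) ⊗ₘ (π t)).bind fun p => q' t p.1 p.2 := rfl
      rw [Finset.sum_eq_sum_Ico_succ_bot htN]
      calc ∫⁻ z, J t z ∂(stateMarginal p0 π q' t)
          = ∫⁻ z, ∫⁻ u, V t z u ∂(π t z) ∂(stateMarginal p0 π q' t) :=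
            lintegral_congr (hpt t htN)
        _ = ∫⁻ p : Z × C, V t p.1 p.2 ∂((stateMarginal p0 π q' t) ⊗ₘ (π t)) :=
            (Measure.lintegral_compProd (hV_meas t htN)).symm
        _ = ∫⁻ p : Z × C, (c t p.1 p.2 + ∫⁻ z', J (t + 1) z' ∂(q' t p.1 p.2))
              ∂((stateMarginal p0 π q' t) ⊗ₘ (π t)) :=
            lintegral_congr fun p => hV t htN p.1 p.2
        _ = (∫⁻ p : Z × C, c t p.1 p.2 ∂((stateMarginal p0 π q' t) ⊗ₘ (π t))) +
              ∫⁻ p : Z × C, (∫⁻ z', J (t + 1) z' ∂(q' t p.1 p.2))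
                ∂((stateMarginal p0 π q' t) ⊗ₘ (π t)) :=
            lintegral_add_left (hc_meas t htN) _
        _ = (∫⁻ p : Z × C, c t p.1 p.2 ∂((stateMarginal p0 π q' t) ⊗ₘ (π t))) +
              ∫⁻ z, J (t + 1) z ∂(stateMarginal p0 π q' (t + 1)) := by
            rw [hb, Measure.lintegral_bind (hq'_meas t htN).aemeasurable (hJ_meas (t + 1) (by omega)).aemeasurable]
        _ = (∫⁻ p : Z × C, c t p.1 p.2 ∂((stateMarginal p0 π q' t) ⊗ₘ (π t))) +
              ((∑ s ∈ Finset.Ico (t + 1) N,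
                ∫⁻ p : Z × C, c s p.1 p.2 ∂((stateMarginal p0 π q' s) ⊗ₘ (π s))) +
              ∫⁻ z, cN z ∂(stateMarginal p0 π q' N)) := by
            rw [ih (t + 1) (by omega)]
        _ = _ := (add_assoc _ _ _).symm
  constructor
  · intro π hπ hπ_dirac
    have hpt : ∀ t < N, ∀ z, J t z ≤ ∫⁻ u, V t z u ∂(π t z) := by
      intro t ht z
      haveI := hπ t ht
      by_cases htu : t ∈ Tu
      · have hinf : J t z = ⨅ u : C, V t z u := by rw [hJ t ht z, if_pos htu]
        calc J t z = ∫⁻ _, J t z ∂(π t z) := by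
              rw [lintegral_const, measure_univ, mul_one]
          _ ≤ ∫⁻ u, V t z u ∂(π t z) :=
            lintegral_mono fun u => by rw [hinf]; exact iInf_le _ u
      · have hVz : Measurable fun u : C => V t z u :=
          (hV_meas t ht).comp measurable_prodMk_left
        rw [hπ_dirac t ht htu z, lintegral_dirac' _ hVz, hJ t ht z, if_neg htu]
    have := keyLe π hπ hpt N 0 (by omega)
    rw [expectedTotalCost, Finset.range_eq_Ico]
    exact this
  · set πs : ℕ → Kernel Z C := fun t => if h : t < N then
        Kernel.deterministic (κ t) (hκ_meas t h)
      else Kernel.deterministic (fun _ => u0) measurable_const with hπs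
    have hπ : ∀ t < N, IsMarkovKernel (πs t) := by
      intro t ht
      simp only [hπs, dif_pos ht]
      infer_instance
    have hpt : ∀ t < N, ∀ z, J t z = ∫⁻ u, V t z u ∂(πs t z) := by
      intro t ht z
      simp only [hπs, dif_pos ht]
      have hVz : Measurable fun u : C => V t z u :=
        (hV_meas t ht).comp measurable_prodMk_left
      rw [Kernel.deterministic_apply, lintegral_dirac' _ hVz]
      exact (hκ_opt t ht z).symm
    have := keyEq πs hπ hpt N 0 (by omega)
    rw [expectedTotalCost, Finset.range_eq_Ico]
    exact this.symm
end
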